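/- Let α, β be nonzero rational numbers, neither equal to 1 or -1, and let p be an odd prime with v_p(α) = v_p(β) = 0. Suppose that v_p(α^{2k} - β) ≥ 1 for some integer k, and that the Legendre symbol (α|p) = -1. Then ord_p(β) < ord_p(α); in fact, ord_p(α)/ord_p(β) is a positive even integer. -/

import Mathlib

/-!
Reduction modulo `p` is multiplicative on `p`-integral rationals, so the residue `b` of `β` is
`a ^ (2 * k)` for the residue `a` of `α`. Since `a` is not a square, its order `n` is even, and
`b ^ (n / 2) = (a ^ n) ^ k = 1`; hence `2 * ord b ∣ n`.
-/

/-- The residue of a rational number `γ` in `𝔽_p = ZMod p` (for `p` prime). -/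
noncomputable def ratResidue (p : ℕ) (γ : ℚ) : ZMod p :=
  if hp : p.Prime then
    haveI : Fact p.Prime := ⟨hp⟩
    (γ : ZMod p)
  else 0

/-- The Legendre symbol `(γ | p)` of the residue of a rational number `γ` modulo `p`. -/
noncomputable def legendreRat (p : ℕ) (γ : ℚ) : ℤ :=
  if hp : p.Prime then
    haveI : Fact p.Prime := ⟨hp⟩
    quadraticChar (ZMod p) (ratResidue p γ)
  else 0

/-- A pair `α, β` of rational numbers is *special* if there are infinitely many odd primes `p`
with `v_p(α) = v_p(β) = 0`, Legendre symbol `(α|p) = -1`, and `v_p(α^{2k} - β) ≥ 1` for some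
integer `k` (where `v_p(0) = ∞` counts as `≥ 1`). -/
def IsSpecialPair (α β : ℚ) : Prop :=
  {p : ℕ | p.Prime ∧ Odd p ∧ padicValRat p α = 0 ∧ padicValRat p β = 0 ∧
    legendreRat p α = -1 ∧
    ∃ k : ℤ, α ^ (2 * k) - β = 0 ∨ 1 ≤ padicValRat p (α ^ (2 * k) - β)}.Infinite


/-- `ordRat p γ` is the multiplicative order of the residue of `γ` in `𝔽_p^×`. -/
noncomputable def ordRat (p : ℕ) (γ : ℚ) : ℕ := orderOf (ratResidue p γ)


namespace Rat

variable {p : ℕ} [hp : Fact p.Prime]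

theorem natCast_den_ne_zero_of_padicValRat_nonneg {q : ℚ} (hq : 0 ≤ padicValRat p q) :
    (q.den : ZMod p) ≠ 0 := by
  rw [Ne, ZMod.natCast_eq_zero_iff]
  intro hden
  have hnum : ¬ (p : ℤ) ∣ q.num := fun hnum =>
    hp.out.not_dvd_one (q.reduced.gcd_eq_one ▸ Nat.dvd_gcd (Int.natCast_dvd.mp hnum) hden)
  have := one_le_padicValNat_of_dvd q.den_nz hden
  rw [padicValRat_def, padicValInt.eq_zero_of_not_dvd hnum] at hq
  omega

theorem cast_zmod_eq_zero_of_one_le_padicValRat {q : ℚ} (hq : 1 ≤ padicValRat p q) :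
    (q : ZMod p) = 0 := by
  have hden := natCast_den_ne_zero_of_padicValRat_nonneg (p := p) (q := q) (by omega)
  have hnum : (p : ℤ) ∣ q.num := by
    rw [padicValRat_def, padicValNat.eq_zero_of_not_dvd
      (fun h => hden ((ZMod.natCast_eq_zero_iff _ _).mpr h))] at hq
    simpa using (padicValInt_dvd_iff (p := p) 1 q.num).mpr (Or.inr (by omega))
  rw [Rat.cast_def, (ZMod.intCast_zmod_eq_zero_iff_dvd _ _).mpr hnum, zero_div]

theorem cast_zmod_eq_of_one_le_padicValRat_sub {q r : ℚ} (hq : 0 ≤ padicValRat p q)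
    (hr : 0 ≤ padicValRat p r) (hqr : 1 ≤ padicValRat p (q - r)) : (q : ZMod p) = r := by
  rw [← sub_eq_zero, ← cast_sub_of_ne_zero (natCast_den_ne_zero_of_padicValRat_nonneg hq)
    (natCast_den_ne_zero_of_padicValRat_nonneg hr)]
  exact cast_zmod_eq_zero_of_one_le_padicValRat hqr

theorem cast_zmod_pow_of_padicValRat_nonneg {q : ℚ} (hq : 0 ≤ padicValRat p q) (n : ℕ) :
    ((q ^ n : ℚ) : ZMod p) = (q : ZMod p) ^ n := by
  induction n with
  | zero => simp
  | succ n ih =>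
    have hqn : 0 ≤ padicValRat p (q ^ n) := by
      rw [padicValRat.pow]; positivity
    rw [pow_succ, cast_mul_of_ne_zero (natCast_den_ne_zero_of_padicValRat_nonneg hqn)
      (natCast_den_ne_zero_of_padicValRat_nonneg hq), ih, pow_succ]

theorem cast_zmod_inv_of_padicValRat_eq_zero {q : ℚ} (hq : padicValRat p q = 0) :
    ((q⁻¹ : ℚ) : ZMod p) = (q : ZMod p)⁻¹ := by
  rcases eq_or_ne q 0 with rfl | hq0
  · simp
  have hinv : padicValRat p q⁻¹ = 0 := by simp [padicValRat.inv (p := p) q, hq]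
  refine eq_inv_of_mul_eq_one_left ?_
  rw [← cast_mul_of_ne_zero (natCast_den_ne_zero_of_padicValRat_nonneg hinv.ge)
    (natCast_den_ne_zero_of_padicValRat_nonneg hq.ge), inv_mul_cancel₀ hq0, cast_one]

theorem cast_zmod_zpow_of_padicValRat_eq_zero {q : ℚ} (hq : padicValRat p q = 0) (n : ℤ) :
    ((q ^ n : ℚ) : ZMod p) = (q : ZMod p) ^ n := by
  cases n with
  | ofNat n =>
    rw [Int.ofNat_eq_natCast, zpow_natCast, zpow_natCast,
      cast_zmod_pow_of_padicValRat_nonneg hq.ge]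
  | negSucc n =>
    have hqn : padicValRat p (q ^ (n + 1)) = 0 := by rw [padicValRat.pow, hq, mul_zero]
    rw [zpow_negSucc, zpow_negSucc, cast_zmod_inv_of_padicValRat_eq_zero hqn,
      cast_zmod_pow_of_padicValRat_nonneg hq.ge]

end Rat

theorem even_orderOf_of_not_isSquare {M : Type*} [Monoid M] {a : M} (ha : ¬ IsSquare a) :
    Even (orderOf a) := by
  by_contra hodd
  obtain ⟨m, hm⟩ := Nat.not_even_iff_odd.mp hodd
  refine ha ⟨a ^ (m + 1), ?_⟩
  rw [← pow_add, show m + 1 + (m + 1) = orderOf a + 1 by omega, pow_succ, pow_orderOf_eq_one,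
    one_mul]

theorem two_mul_orderOf_zpow_two_mul_dvd {G : Type*} [DivisionMonoid G] {a : G}
    (ha : Even (orderOf a)) (k : ℤ) : 2 * orderOf (a ^ (2 * k)) ∣ orderOf a := by
  obtain ⟨m, hm⟩ := ha
  have : (a ^ (2 * k)) ^ m = 1 := by
    rw [← zpow_natCast, ← zpow_mul,
      show 2 * k * m = (orderOf a : ℤ) * k by push_cast [hm]; ring,
      zpow_mul, zpow_natCast, pow_orderOf_eq_one, one_zpow]
  rw [hm, ← two_mul]
  exact mul_dvd_mul_left 2 (orderOf_dvd_of_pow_eq_one this)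

theorem ratResidue_eq_cast (p : ℕ) [hp : Fact p.Prime] (γ : ℚ) :
    ratResidue p γ = (γ : ZMod p) := by
  rw [ratResidue, dif_pos hp.out]

theorem stmt2_general (α β : ℚ) (p : ℕ) (hp : p.Prime)
    (hvα : padicValRat p α = 0) (hvβ : padicValRat p β = 0)
    (hk : ∃ k : ℤ, α ^ (2 * k) - β = 0 ∨ 1 ≤ padicValRat p (α ^ (2 * k) - β))
    (hleg : legendreRat p α = -1) :
    ordRat p β < ordRat p α ∧
      ∃ m : ℕ, 0 < m ∧ Even m ∧ ordRat p α = m * ordRat p β := by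
  have : Fact p.Prime := ⟨hp⟩
  obtain ⟨k, hk⟩ := hk
  have hvαk : padicValRat p (α ^ (2 * k)) = 0 := by rw [padicValRat.zpow, hvα, mul_zero]
  have hβ : ratResidue p β = ratResidue p α ^ (2 * k) := by
    rw [ratResidue_eq_cast, ratResidue_eq_cast, ← Rat.cast_zmod_zpow_of_padicValRat_eq_zero hvα]
    rcases hk with h | h
    · rw [sub_eq_zero.mp h]
    · exact (Rat.cast_zmod_eq_of_one_le_padicValRat_sub hvαk.ge hvβ.ge h).symm
  have hsq : ¬ IsSquare (ratResidue p α) := by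
    rw [legendreRat, dif_pos hp] at hleg
    exact quadraticChar_neg_one_iff_not_isSquare.mp (by exact_mod_cast hleg)
  have hpos : 0 < ordRat p α := by
    have ha0 : ratResidue p α ≠ 0 := fun h => hsq (h ▸ IsSquare.zero)
    exact orderOf_pos_iff.mpr <| isOfFinOrder_iff_pow_eq_one.mpr
      ⟨p - 1, Nat.sub_pos_of_lt hp.one_lt, ZMod.pow_card_sub_one_eq_one ha0⟩
  obtain ⟨c, hc⟩ := two_mul_orderOf_zpow_two_mul_dvd (even_orderOf_of_not_isSquare hsq) k
  rw [← ordRat, ← hβ, ← ordRat] at hc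
  have hc0 : 0 < c := Nat.pos_of_mul_pos_left (hc ▸ hpos)
  refine ⟨by nlinarith, 2 * c, by omega, even_two_mul c, by rw [hc]; ring⟩

theorem stmt2 (α β : ℚ) (hα0 : α ≠ 0) (hβ0 : β ≠ 0) (hα1 : α ≠ 1) (hα1' : α ≠ -1)
    (hβ1 : β ≠ 1) (hβ1' : β ≠ -1) (p : ℕ) (hp : p.Prime) (hpodd : Odd p)
    (hvα : padicValRat p α = 0) (hvβ : padicValRat p β = 0)
    (hk : ∃ k : ℤ, α ^ (2 * k) - β = 0 ∨ 1 ≤ padicValRat p (α ^ (2 * k) - β))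
    (hleg : legendreRat p α = -1) :
    ordRat p β < ordRat p α ∧
      ∃ m : ℕ, 0 < m ∧ Even m ∧ ordRat p α = m * ordRat p β :=
  stmt2_general α β p hp hvα hvβ hk hleg
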